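/- arXiv:2601.13756 — 2 statements merged into one kernel-verified Lean document; each statement's English description precedes it below -/
import Mathlib

section
/- For every n ∈ ℕ with n > 1, neither the all-ones vector 1_{n+1} ∈ ℝ^{n+1} nor the vector λ̃ = ((n+1)/n)·(1/2, 1, …, 1, 1/2) ∈ ℝ^{n+1} is a minimizer of σ(B(·)) over Λ_n; that is, there exists λ ∈ Λ_n with σ(B(λ)) < σ(B(1_{n+1})), and there exists λ' ∈ Λ_n with σ(B(λ')) < σ(B(λ̃)). -/
/-!
If `B(λ)` has an eigenvector with positive entries for the eigenvalue `μ`, then `σ(B(λ)) = μ`: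
pairing any eigenvector with this positive one (`B(λ)` is symmetric and nonnegative) bounds every
eigenvalue by `μ`. Writing `w_k = λ_{k-1}^{-1/2}` and padding the eigenvector `u_1, …, u_{n+2}` by
`u_0 = u_{n+3} = 0`, the eigen-equation is the recurrence `w_k u_k + w_{k+1} u_{k+2} = μ u_{k+1}`.
For `λ = 1` the vector `u_k = sin (k π / (n + 3))` gives `σ = 2 cos (π / (n + 3))`; for `λ̃` a vector
constant in the interior gives `σ = 2 √(n / (n + 1))`. Modifying the two outermost weights on each
side keeps a constant interior eigenvector with eigenvalue `2` while lowering `∑ λ_i` by more than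
`16 / 15`; dividing by `R = 1 - 16 / (15 (n + 1))` keeps the mean at most `1` and gives
`σ = 2 √R`, below both values for `n ≥ 3`. For `n = 2` an explicit `λ` with eigenvector `(2, 3, 3, 2)` does the same.
-/

open Real

/-- The `(n+2) × (n+2)` symmetric tridiagonal matrix `B(λ)` with zero diagonal and
entries `λ_{j}^{-1/2}` on the sub/super-diagonals (0-based indexing: the entry in
positions `(i, i+1)` and `(i+1, i)` is `(l i)^{-1/2}` for `i = 0, …, n`). -/
noncomputable def Bmat (n : ℕ) (l : Fin (n+1) → ℝ) :
    Matrix (Fin (n+2)) (Fin (n+2)) ℝ :=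
  Matrix.of fun i j =>
    if h1 : (i : ℕ) + 1 = (j : ℕ) then
      l ⟨(i : ℕ), by have := j.isLt; omega⟩ ^ (-(1/2) : ℝ)
    else if h2 : (j : ℕ) + 1 = (i : ℕ) then
      l ⟨(j : ℕ), by have := i.isLt; omega⟩ ^ (-(1/2) : ℝ)
    else 0

/-- The largest eigenvalue (Perron root) of `B(λ)`. -/
noncomputable def sigmaB (n : ℕ) (l : Fin (n+1) → ℝ) : ℝ :=
  sSup {μ : ℝ | ∃ v : Fin (n+2) → ℝ, v ≠ 0 ∧ (Bmat n l).mulVec v = μ • v}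

/-- The feasible set `Λ_n`: all entries positive and `(1/(n+1)) ∑ λ_i ≤ 1`. -/
def Feasible (n : ℕ) (l : Fin (n+1) → ℝ) : Prop :=
  (∀ i, 0 < l i) ∧ (∑ i, l i) / ((n : ℝ) + 1) ≤ 1

/-- `λ̄` is a minimizer of `σ(B(·))` over `Λ_n`. -/
def IsMinimizer (n : ℕ) (l : Fin (n+1) → ℝ) : Prop :=
  Feasible n l ∧ ∀ m : Fin (n+1) → ℝ, Feasible n m → sigmaB n l ≤ sigmaB n m

/-- A Perron vector of `B(λ)`: positive entries, Euclidean norm one,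
eigenvector for the Perron root. -/
def IsPerronVector (n : ℕ) (l : Fin (n+1) → ℝ) (v : Fin (n+2) → ℝ) : Prop :=
  (∀ i, 0 < v i) ∧ (∑ i, v i ^ 2) = 1 ∧ (Bmat n l).mulVec v = sigmaB n l • v

open Finset Matrix

theorem Matrix.abs_le_of_mulVec_eq_smul_of_vecMul_eq_smul {ι : Type*} [Fintype ι]
    {A : Matrix ι ι ℝ} (hA : ∀ i j, 0 ≤ A i j) {u x : ι → ℝ} {μ ν : ℝ} (hu : ∀ i, 0 < u i)
    (huA : u ᵥ* A = μ • u) (hx : x ≠ 0) (hAx : A *ᵥ x = ν • x) : |ν| ≤ μ := by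
  set y : ι → ℝ := fun i => |x i|
  have hy : 0 < u ⬝ᵥ y := by
    obtain ⟨k, hk⟩ := Function.ne_iff.mp hx
    exact sum_pos' (fun i _ => mul_nonneg (hu i).le (abs_nonneg _))
      ⟨k, mem_univ _, mul_pos (hu k) (abs_pos.mpr hk)⟩
  have hAy : ∀ i, |(A *ᵥ x) i| ≤ (A *ᵥ y) i := fun i =>
    (abs_sum_le_sum_abs _ _).trans_eq
      (sum_congr rfl fun j _ => by rw [abs_mul, abs_of_nonneg (hA i j)])
  have key : |ν| * (u ⬝ᵥ y) ≤ μ * (u ⬝ᵥ y) := calc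
    |ν| * (u ⬝ᵥ y) = u ⬝ᵥ fun i => |(A *ᵥ x) i| := by
      simp only [hAx, dotProduct, mul_sum, Pi.smul_apply, smul_eq_mul, abs_mul, y]
      exact sum_congr rfl fun i _ => by ring
    _ ≤ u ⬝ᵥ (A *ᵥ y) := sum_le_sum fun i _ => mul_le_mul_of_nonneg_left (hAy i) (hu i).le
    _ = μ * (u ⬝ᵥ y) := by rw [dotProduct_mulVec, huA, smul_dotProduct, smul_eq_mul]
  exact le_of_mul_le_mul_right key hy

lemma Real.rpow_neg_one_half_eq_of_mul_sq_eq_one {x y : ℝ} (hx : 0 < x) (hy : 0 < y)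
    (h : x * y ^ 2 = 1) : x ^ (-(1 / 2) : ℝ) = y := by
  rw [Real.rpow_neg hx.le, ← Real.sqrt_eq_rpow, ← Real.sqrt_inv, eq_inv_of_mul_eq_one_left h,
    inv_inv, Real.sqrt_sq hy.le]

lemma Bmat_transpose (n : ℕ) (l : Fin (n + 1) → ℝ) : (Bmat n l)ᵀ = Bmat n l := by
  ext i j
  simp only [transpose_apply, Bmat, of_apply]
  split_ifs <;> first | omega | rfl

lemma Bmat_nonneg {n : ℕ} {l : Fin (n + 1) → ℝ} (hl : ∀ i, 0 ≤ l i) (i j : Fin (n + 2)) :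
    0 ≤ Bmat n l i j := by
  simp only [Bmat, of_apply]
  split_ifs
  exacts [Real.rpow_nonneg (hl _) _, Real.rpow_nonneg (hl _) _, le_rfl]

lemma sum_range_tridiagonal {w u : ℕ → ℝ} {N i : ℕ} (hi : i < N) (hu₀ : u 0 = 0)
    (hu : u (N + 1) = 0) :
    ∑ j ∈ range N, (if i + 1 = j then w j else if j + 1 = i then w i else 0) * u (j + 1) =
      w i * u i + w (i + 1) * u (i + 2) := by
  have hsplit : ∀ j, (if i + 1 = j then w j else if j + 1 = i then w i else 0) * u (j + 1) =
      (if i + 1 = j then w j * u (j + 1) else 0) + (if j + 1 = i then w i * u (j + 1) else 0) := by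
    intro j
    split_ifs <;> first | omega | ring
  rw [sum_congr rfl fun j _ => hsplit j, sum_add_distrib, sum_ite_eq, add_comm]
  congr 1
  · rcases i with _ | m
    · simp [hu₀]
    · simp [Nat.add_right_cancel_iff, show m < N by omega]
  · split_ifs with h
    · rfl
    · rw [show i + 2 = N + 1 by simp at h; omega, hu, mul_zero]

section Weights

variable {n : ℕ} {l : Fin (n + 1) → ℝ} {w : ℕ → ℝ}

lemma Bmat_apply_of_weights (hw : ∀ i : Fin (n + 1), l i ^ (-(1 / 2) : ℝ) = w (i + 1))
    (i j : Fin (n + 2)) :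
    Bmat n l i j = if (i : ℕ) + 1 = j then w j else if (j : ℕ) + 1 = i then w i else 0 := by
  simp only [Bmat, of_apply]
  split_ifs with h₁ h₂
  · rw [hw, h₁]
  · rw [hw, h₂]
  · rfl

lemma Bmat_mulVec_of_weights (hw : ∀ i : Fin (n + 1), l i ^ (-(1 / 2) : ℝ) = w (i + 1))
    {u : ℕ → ℝ} (hu₀ : u 0 = 0) (hu : u (n + 3) = 0) (i : Fin (n + 2)) :
    (Bmat n l *ᵥ fun j => u (j + 1)) i = w i * u i + w (i + 1) * u (i + 2) := by
  simp only [mulVec, dotProduct, Bmat_apply_of_weights hw]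
  rw [Fin.sum_univ_eq_sum_range (fun j => (if (i : ℕ) + 1 = j then w j
    else if j + 1 = (i : ℕ) then w i else 0) * u (j + 1))]
  exact sum_range_tridiagonal i.isLt hu₀ hu

theorem sigmaB_eq_of_pos_eigenvector (hl : ∀ i, 0 ≤ l i)
    (hw : ∀ i : Fin (n + 1), l i ^ (-(1 / 2) : ℝ) = w (i + 1)) {u : ℕ → ℝ} {μ : ℝ}
    (hu₀ : u 0 = 0) (hu : u (n + 3) = 0) (hpos : ∀ k, 0 < k → k < n + 3 → 0 < u k)
    (heig : ∀ k ≤ n + 1, w k * u k + w (k + 1) * u (k + 2) = μ * u (k + 1)) :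
    sigmaB n l = μ := by
  set v : Fin (n + 2) → ℝ := fun j => u (j + 1)
  have hv : Bmat n l *ᵥ v = μ • v := funext fun i => by
    rw [Bmat_mulVec_of_weights hw hu₀ hu, heig i (by omega), Pi.smul_apply, smul_eq_mul]
  have hvpos : ∀ i, 0 < v i := fun i => hpos _ (by omega) (by omega)
  refine IsGreatest.csSup_eq ⟨⟨v, fun h => (hvpos 0).ne' (congrFun h 0), hv⟩, ?_⟩
  rintro ν ⟨x, hx, hxν⟩
  refine (le_abs_self ν).trans <| Matrix.abs_le_of_mulVec_eq_smul_of_vecMul_eq_smul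
    (Bmat_nonneg hl) hvpos ?_ hx hxν
  rw [← mulVec_transpose, Bmat_transpose, hv]

end Weights

theorem sigmaB_const_one (n : ℕ) : sigmaB n (fun _ => 1) = 2 * cos (π / (n + 3)) := by
  have hn : (0 : ℝ) < n + 3 := by positivity
  set θ := π / (n + 3)
  have hθ : (n + 3) * θ = π := mul_div_cancel₀ π hn.ne'
  refine sigmaB_eq_of_pos_eigenvector (w := fun _ => 1) (u := fun k => sin (k * θ))
    (fun _ => zero_le_one) (fun _ => one_rpow _) (by simp) ?_ ?_ ?_
  · rw [Nat.cast_add, Nat.cast_ofNat, hθ, sin_pi]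
  · intro k hk0 hk
    have hk' : (k : ℝ) < n + 3 := by exact_mod_cast hk
    exact sin_pos_of_pos_of_lt_pi (by positivity) (by rw [← hθ]; gcongr)
  · intro k _
    have h₁ : (k : ℝ) * θ = (k + 1 : ℕ) * θ - θ := by push_cast; ring
    have h₂ : ((k + 2 : ℕ) : ℝ) * θ = (k + 1 : ℕ) * θ + θ := by push_cast; ring
    rw [h₁, h₂, sin_sub, sin_add]
    ring

theorem sigmaB_tilde (n : ℕ) (hn : 0 < n) :
    sigmaB n (fun i => if (i : ℕ) = 0 ∨ (i : ℕ) = n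
      then ((n : ℝ) + 1) / (2 * n) else ((n : ℝ) + 1) / n) = 2 * √(n / (n + 1)) := by
  have hn' : (0 : ℝ) < n := by exact_mod_cast hn
  have hs : √2 * √2 = 2 := Real.mul_self_sqrt zero_le_two
  set t := √(n / (n + 1))
  have ht : t ^ 2 = n / (n + 1) := Real.sq_sqrt (by positivity)
  have htpos : 0 < t := Real.sqrt_pos.mpr (by positivity)
  refine sigmaB_eq_of_pos_eigenvector
    (w := fun k => t * if k = 1 ∨ k = n + 1 then √2 else 1)
    (u := fun k => if k = 0 ∨ k = n + 3 then 0 else if k = 1 ∨ k = n + 2 then 1 else √2)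
    (fun i => by split_ifs <;> positivity) (fun i => ?_) (by simp) (by simp) ?_ ?_
  · simp only [add_left_inj, Nat.add_eq_right]
    split_ifs
    · refine Real.rpow_neg_one_half_eq_of_mul_sq_eq_one (by positivity) (by positivity) ?_
      rw [mul_pow, ht, Real.sq_sqrt zero_le_two]
      field_simp
    · refine Real.rpow_neg_one_half_eq_of_mul_sq_eq_one (by positivity) (by positivity) ?_
      rw [mul_one, ht]
      field_simp
  · intro k hk0 hk
    split_ifs <;> first | omega | positivity
  · intro k hk
    split_ifs <;> (try simp only [false_or] at *) <;>
      first | omega | linear_combination t * hs | ring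

/- With unit weights and entries in the interior, the eigen-equations at the two boundary layers
force `p = u₂`, `q = u₁` onto `p² - q² = 1 / 2`; `(11 / 12, 7 / 12)` is a rational point near the
choice that lowers `∑ λ_i` the most, here by `3827 / 3528`. -/
noncomputable def layerWeight (n k : ℕ) : ℝ :=
  if k = 1 ∨ k = n + 1 then 14 / 11 else if k = 2 ∨ k = n then 12 / 11 else 1

noncomputable def layerVector (n k : ℕ) : ℝ :=
  if k = 0 ∨ k = n + 3 then 0
  else if k = 1 ∨ k = n + 2 then 7 / 12 else if k = 2 ∨ k = n + 1 then 11 / 12 else 1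

lemma layerWeight_pos (n k : ℕ) : 0 < layerWeight n k := by
  unfold layerWeight
  split_ifs <;> norm_num

lemma layerVector_pos {n k : ℕ} (hk0 : 0 < k) (hk : k < n + 3) : 0 < layerVector n k := by
  unfold layerVector
  split_ifs <;> first | omega | norm_num

lemma layerVector_eigen {n : ℕ} (hn : 3 ≤ n) {k : ℕ} (hk : k ≤ n + 1) :
    layerWeight n k * layerVector n k + layerWeight n (k + 1) * layerVector n (k + 2) =
      2 * layerVector n (k + 1) := by
  rcases (show k = 0 ∨ k = 1 ∨ (k = 2 ∧ n = 3) ∨ (k = 2 ∧ 4 ≤ n) ∨ (3 ≤ k ∧ k + 2 ≤ n) ∨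
      (4 ≤ n ∧ k = n - 1) ∨ k = n ∨ k = n + 1 by omega) with h | h | h | h | h | h | h | h <;>
  simp (disch := omega) only [layerWeight, layerVector, if_pos, if_neg] <;> norm_num

lemma sum_inv_sq_layerWeight {n : ℕ} (hn : 3 ≤ n) :
    ∑ i : Fin (n + 1), (layerWeight n (i + 1) ^ 2)⁻¹ = n + 1 - 3827 / 3528 := by
  obtain ⟨m, rfl⟩ : ∃ m, n = m + 3 := ⟨n - 3, by omega⟩
  have hmid : ∀ k ∈ range m, (layerWeight (m + 3) (k + 2 + 1) ^ 2)⁻¹ = 1 := fun k hk => by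
    rw [mem_range] at hk
    simp (disch := omega) only [layerWeight, if_neg, one_pow, inv_one]
  rw [Fin.sum_univ_eq_sum_range (fun k => (layerWeight (m + 3) (k + 1) ^ 2)⁻¹),
    sum_range_succ, sum_range_succ, sum_range_succ', sum_range_succ', sum_congr rfl hmid]
  norm_num [layerWeight]
  ring

noncomputable def layerScale (n : ℕ) : ℝ := 1 - 16 / (15 * (n + 1))

noncomputable def layerLambda (n : ℕ) : Fin (n + 1) → ℝ :=
  fun i => (layerWeight n (i + 1) ^ 2)⁻¹ / layerScale n

lemma layerScale_pos {n : ℕ} (hn : 1 ≤ n) : 0 < layerScale n := by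
  have : (1 : ℝ) ≤ n := by exact_mod_cast hn
  rw [layerScale, sub_pos, div_lt_one (by positivity)]
  linarith

lemma feasible_layerLambda {n : ℕ} (hn : 3 ≤ n) : Feasible n (layerLambda n) := by
  have hR := layerScale_pos (show 1 ≤ n by omega)
  refine ⟨fun i => div_pos (inv_pos.mpr (pow_pos (layerWeight_pos _ _) 2)) hR, ?_⟩
  simp only [layerLambda]
  rw [← sum_div, sum_inv_sq_layerWeight hn, div_div, div_le_one (by positivity),
    layerScale]
  field_simp
  linarith

theorem sigmaB_layerLambda {n : ℕ} (hn : 3 ≤ n) :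
    sigmaB n (layerLambda n) = 2 * √(layerScale n) := by
  have hR := layerScale_pos (show 1 ≤ n by omega)
  rw [mul_comm]
  refine sigmaB_eq_of_pos_eigenvector (w := fun k => √(layerScale n) * layerWeight n k)
    (u := layerVector n) (fun i => (div_pos (inv_pos.mpr (pow_pos (layerWeight_pos _ _) 2)) hR).le)
    (fun i => ?_) (by simp [layerVector]) (by simp [layerVector]) (fun k => layerVector_pos)
    (fun k hk => by linear_combination √(layerScale n) * layerVector_eigen hn hk)
  have hW := layerWeight_pos n (i + 1)
  refine Real.rpow_neg_one_half_eq_of_mul_sq_eq_one (by positivity) (by positivity) ?_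
  rw [mul_pow, Real.sq_sqrt hR.le]
  field_simp

lemma layerScale_lt (n : ℕ) : layerScale n < n / (n + 1) := by
  rw [layerScale, lt_div_iff₀ (by positivity)]
  field_simp
  linarith

lemma sqrt_layerScale_lt_cos {n : ℕ} (hn : 3 ≤ n) : √(layerScale n) < cos (π / (n + 3)) := by
  have hn' : (3 : ℝ) ≤ n := by exact_mod_cast hn
  have hπ : π ^ 2 < 10 := by nlinarith [pi_lt_d2, pi_pos]
  have hθ : (π / (n + 3)) ^ 2 / 2 ≤ 5 / (n + 3) ^ 2 := by
    rw [div_pow, div_div, div_le_div_iff₀ (by positivity) (by positivity)]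
    nlinarith [sq_nonneg ((n : ℝ) + 3)]
  have hR : layerScale n < (1 - 5 / (n + 3) ^ 2) ^ 2 := by
    rw [layerScale]
    field_simp
    nlinarith [mul_nonneg (sub_nonneg.mpr hn') (sq_nonneg ((n : ℝ) - 3)), sq_nonneg ((n : ℝ) - 3)]
  calc √(layerScale n) < 1 - 5 / (n + 3) ^ 2 := by
        refine (Real.sqrt_lt' ?_).mpr hR
        rw [sub_pos, div_lt_one (by positivity)]
        nlinarith
    _ ≤ 1 - (π / (n + 3)) ^ 2 / 2 := by linarith
    _ ≤ cos (π / (n + 3)) := one_sub_sq_div_two_le_cos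

noncomputable def lambdaTwo : Fin 3 → ℝ := ![(150 / 161) ^ 2, (180 / 161) ^ 2, (150 / 161) ^ 2]

lemma feasible_lambdaTwo : Feasible 2 lambdaTwo := by
  refine ⟨fun i => by fin_cases i <;> norm_num [lambdaTwo], ?_⟩
  norm_num [lambdaTwo, Fin.sum_univ_succ]

theorem sigmaB_lambdaTwo : sigmaB 2 lambdaTwo = 161 / 100 := by
  refine sigmaB_eq_of_pos_eigenvector (w := fun k => if k = 2 then 161 / 180 else 161 / 150)
    (u := fun k => if k = 0 ∨ k = 5 then 0 else if k = 1 ∨ k = 4 then 2 else 3)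
    (fun i => by fin_cases i <;> norm_num [lambdaTwo]) (fun i => ?_) (by norm_num)
    (by norm_num) (fun k hk0 hk => by interval_cases k <;> norm_num)
    (fun k hk => by interval_cases k <;> norm_num)
  fin_cases i <;>
    exact Real.rpow_neg_one_half_eq_of_mul_sq_eq_one (by norm_num [lambdaTwo]) (by norm_num)
      (by norm_num [lambdaTwo])

theorem exists_feasible_sigmaB_lt {n : ℕ} (hn : 2 ≤ n) : ∃ l, Feasible n l ∧
    sigmaB n l < 2 * cos (π / (n + 3)) ∧ sigmaB n l < 2 * √(n / (n + 1)) := by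
  obtain rfl | hn3 : n = 2 ∨ 3 ≤ n := by omega
  · refine ⟨lambdaTwo, feasible_lambdaTwo, ?_, ?_⟩ <;> rw [sigmaB_lambdaTwo]
    · have h5 : (2.22 : ℝ) < √5 := Real.lt_sqrt_of_sq_lt (by norm_num)
      norm_num [cos_pi_div_five]
      linarith
    · have : (161 / 200 : ℝ) < √(2 / 3) := Real.lt_sqrt_of_sq_lt (by norm_num)
      rw [show ((2 : ℕ) : ℝ) / ((2 : ℕ) + 1) = 2 / 3 by norm_num]
      linarith
  · refine ⟨layerLambda n, feasible_layerLambda hn3, ?_, ?_⟩ <;> rw [sigmaB_layerLambda hn3]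
    · linarith [sqrt_layerScale_lt_cos hn3]
    · linarith [Real.sqrt_lt_sqrt (layerScale_pos (show 1 ≤ n by omega)).le (layerScale_lt n)]

/-- for `n > 1` neither the all-ones vector nor
`λ̃ = ((n+1)/n)·(1/2,1,…,1,1/2)` is a minimizer. -/
theorem stmt_2 (n : ℕ) (hn : 1 < n) :
    (∃ l : Fin (n+1) → ℝ, Feasible n l ∧
      sigmaB n l < sigmaB n (fun _ => 1)) ∧
    (∃ l' : Fin (n+1) → ℝ, Feasible n l' ∧
      sigmaB n l' < sigmaB n (fun i => if (i : ℕ) = 0 ∨ (i : ℕ) = n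
        then ((n : ℝ) + 1) / (2 * n) else ((n : ℝ) + 1) / n)) := by
  obtain ⟨l, hl, hlt_one, hlt_tilde⟩ := exists_feasible_sigmaB_lt hn
  rw [sigmaB_const_one, sigmaB_tilde n (by omega)]
  exact ⟨⟨l, hl, hlt_one⟩, ⟨l, hl, hlt_tilde⟩⟩
end

section
/- Let n ∈ ℕ with n ≥ 1, let λ̄ be a minimizer of σ(B(·)) over Λ_n with σ̄ = σ(B(λ̄)), let v̄ be a Perron vector of B(λ̄), set v̄_0 := 0, v̄_{n+3} := 0, ā_i := (v̄_i/v̄_1)^{2/3} for i = 0,…,n+3, and define q̄ := 2 σ̄^{−2/3} λ̄_0^{−1/3}. Then ā_i < q̄ for all i = 0,…,n+3. -/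
open Real

/-!
At a minimiser the Lagrange condition says that the partial derivatives
`∂σ/∂λ_i = -λ_i^{-3/2} v_i v_{i+1}` all agree. It is derived without eigenvalue perturbation
theory: if two of them differed, moving weight from one edge to the other and correcting the
Perron vector to first order would give a positive test vector `u` with `B u < σ u`, hence (by the
Collatz–Wielandt bound) a feasible point with a smaller Perron root.

Writing `λ_i^{-1/2} v_i^{1/3} v_{i+1}^{1/3} = γ`, the eigenvalue equation becomes the discrete
equation `s_{i-1} + s_{i+1} = K s_i²` for `s_i = v_i^{2/3}` and `K = σ/γ`, with `s_0 = s_{n+3} = 0`.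
At the maximum of `s` this gives `K s_max ≤ 2`, with equality impossible because it would propagate
to the boundary. Finally `K s_1 = σ^{2/3} λ_0^{1/3}` by the first row, so `ā_i = s_i/s_1 < q̄`.
-/

open Matrix Filter Topology

/-- The padding `v̄_0 = v̄_{n+3} = 0` of the paper, with the entry `x j` at position `j + 1`. -/
def shiftPad {m : ℕ} (x : Fin m → ℝ) (k : ℕ) : ℝ :=
  if h : k ≠ 0 ∧ k - 1 < m then x ⟨k - 1, h.2⟩ else 0

section ShiftPad

variable {m : ℕ}

@[simp] theorem shiftPad_zero (x : Fin m → ℝ) : shiftPad x 0 = 0 := by simp [shiftPad]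

@[simp] theorem shiftPad_succ (x : Fin m → ℝ) (j : Fin m) : shiftPad x (j + 1) = x j := by
  simp [shiftPad, j.isLt]

theorem shiftPad_of_lt (x : Fin m → ℝ) {k : ℕ} (hk : m < k) : shiftPad x k = 0 := by
  rw [shiftPad, dif_neg (by omega)]

theorem shiftPad_nonneg {x : Fin m → ℝ} (hx : ∀ j, 0 ≤ x j) (k : ℕ) : 0 ≤ shiftPad x k := by
  unfold shiftPad
  split_ifs
  exacts [hx _, le_rfl]

theorem shiftPad_pos {x : Fin m → ℝ} (hx : ∀ j, 0 < x j) {k : ℕ} (hk0 : k ≠ 0) (hk : k ≤ m) :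
    0 < shiftPad x k := by
  obtain ⟨j, rfl⟩ := Nat.exists_eq_add_one.mpr (Nat.pos_of_ne_zero hk0)
  exact shiftPad_succ x ⟨j, hk⟩ ▸ hx _

theorem eq_shiftPad_of_le {x : Fin m → ℝ} {X : ℕ → ℝ} (h0 : X 0 = 0) (htop : X (m + 1) = 0)
    (hX : ∀ j : Fin m, X (j + 1) = x j) {k : ℕ} (hk : k ≤ m + 1) : X k = shiftPad x k := by
  rcases k with _ | k
  · simp [h0]
  · rcases Nat.lt_or_ge k m with h | h
    · exact (hX ⟨k, h⟩).trans (shiftPad_succ x ⟨k, h⟩).symm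
    · obtain rfl : k = m := by omega
      rw [htop, shiftPad_of_lt x (by omega)]

end ShiftPad

def pathAdjMatrix (n : ℕ) (e : Fin (n+1) → ℝ) : Matrix (Fin (n+2)) (Fin (n+2)) ℝ :=
  Matrix.of fun i j =>
    if h : (i : ℕ) + 1 = j then e ⟨i, by omega⟩
    else if h : (j : ℕ) + 1 = i then e ⟨j, by omega⟩ else 0

theorem Bmat_eq_pathAdjMatrix (n : ℕ) (l : Fin (n+1) → ℝ) :
    Bmat n l = pathAdjMatrix n fun i => l i ^ (-(1/2) : ℝ) := rfl

section PathAdjMatrix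

variable {n : ℕ}

theorem pathAdjMatrix_transpose (e : Fin (n+1) → ℝ) :
    (pathAdjMatrix n e)ᵀ = pathAdjMatrix n e := by
  ext i j
  simp only [transpose_apply, pathAdjMatrix, of_apply]
  split_ifs <;> first | rfl | omega

theorem pathAdjMatrix_nonneg {e : Fin (n+1) → ℝ} (he : ∀ i, 0 ≤ e i) (i j : Fin (n+2)) :
    0 ≤ pathAdjMatrix n e i j := by
  simp only [pathAdjMatrix, of_apply]
  split_ifs <;> first | exact he _ | rfl

/-- Vertex `j` of the path is position `j + 1` of the padded sequences `X` and `E`, so that the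
boundary terms of the first and last rows vanish with `X 0 = X (n + 3) = 0`. -/
theorem pathAdjMatrix_mulVec_apply {e : Fin (n+1) → ℝ} {x : Fin (n+2) → ℝ} {E X : ℕ → ℝ}
    (hE : ∀ i : Fin (n+1), E (i + 1) = e i) (hX0 : X 0 = 0) (hXtop : X (n + 3) = 0)
    (hX : ∀ j : Fin (n+2), X (j + 1) = x j) (j : Fin (n+2)) :
    (pathAdjMatrix n e *ᵥ x) j = E j * X j + E (j + 1) * X (j + 2) := by
  have hterm : ∀ k : Fin (n+2), pathAdjMatrix n e j k * x k =
      (if (k : ℕ) = j + 1 then E (j + 1) * X (j + 2) else 0) +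
        (if (k : ℕ) + 1 = j then E j * X j else 0) := by
    intro k
    simp only [pathAdjMatrix, of_apply]
    split_ifs <;> try omega
    · rw [← hX, ← hE ⟨j, _⟩, add_zero]; congr 2; omega
    · rw [← hX, ← hE ⟨k, _⟩, zero_add]; congr 2
    · simp
  have hup : (if (j : ℕ) + 1 ∈ Finset.range (n + 2) then E (j + 1) * X (j + 2) else 0) =
      E (j + 1) * X (j + 2) := by
    split_ifs with h
    · rfl
    · rw [show (j : ℕ) + 2 = n + 3 by rw [Finset.mem_range] at h; omega, hXtop, mul_zero]
  have hdown : (∑ k ∈ Finset.range (n + 2), if k + 1 = (j : ℕ) then E j * X j else 0) =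
      E j * X j := by
    obtain ⟨_ | j, hj⟩ := j
    · simp [hX0]
    · simp only [Nat.add_right_cancel_iff, Finset.sum_ite_eq', Finset.mem_range]
      rw [if_pos (by omega)]
  rw [mulVec, dotProduct, Finset.sum_congr rfl fun k _ => hterm k, Finset.sum_add_distrib,
    Fin.sum_univ_eq_sum_range (fun k => if k = (j : ℕ) + 1 then E (j + 1) * X (j + 2) else 0),
    Fin.sum_univ_eq_sum_range (fun k => if k + 1 = (j : ℕ) then E j * X j else 0),
    Finset.sum_ite_eq', hup, hdown, add_comm]

theorem dotProduct_pathAdjMatrix_mulVec (e : Fin (n+1) → ℝ) (x : Fin (n+2) → ℝ) :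
    x ⬝ᵥ (pathAdjMatrix n e *ᵥ x) = 2 * ∑ i : Fin (n+1), e i * x i.castSucc * x i.succ := by
  set X := shiftPad x
  set f : ℕ → ℝ := fun k => shiftPad e k * X k * X (k + 1)
  have hrow := pathAdjMatrix_mulVec_apply (shiftPad_succ e) (shiftPad_zero x)
    (shiftPad_of_lt x (by omega)) (shiftPad_succ x)
  have hf0 : f 0 = 0 := by simp [f, X]
  have hftop : f (n + 2) = 0 := by simp [f, X, shiftPad_of_lt x (by omega : n + 2 < n + 3)]
  calc x ⬝ᵥ (pathAdjMatrix n e *ᵥ x)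
      = ∑ j ∈ Finset.range (n + 2), (f j + f (j + 1)) := by
        rw [dotProduct, ← Fin.sum_univ_eq_sum_range]
        refine Finset.sum_congr rfl fun j _ => ?_
        rw [hrow, ← shiftPad_succ x]
        ring
    _ = 2 * ∑ j ∈ Finset.range (n + 1), f (j + 1) := by
        rw [Finset.sum_add_distrib, Finset.sum_range_succ' f,
          Finset.sum_range_succ (fun j => f (j + 1)) (n + 1), hf0, hftop]
        ring
    _ = 2 * ∑ i : Fin (n+1), e i * x i.castSucc * x i.succ := by
        rw [← Fin.sum_univ_eq_sum_range]
        simp only [f, X, shiftPad_succ, ← shiftPad_succ x, Fin.val_castSucc, Fin.val_succ]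

theorem eq_zero_of_pathAdjMatrix_mulVec_eq_smul {e : Fin (n+1) → ℝ} (he : ∀ i, e i ≠ 0)
    {σ : ℝ} {z : Fin (n+2) → ℝ} (hz : pathAdjMatrix n e *ᵥ z = σ • z) (hz0 : z 0 = 0) :
    z = 0 := by
  have hrow := pathAdjMatrix_mulVec_apply (shiftPad_succ e) (shiftPad_zero z)
    (shiftPad_of_lt z (by omega)) (shiftPad_succ z)
  have hvanish : ∀ k, shiftPad z k = 0 ∧ shiftPad z (k + 1) = 0 := by
    intro k
    induction k with
    | zero => exact ⟨shiftPad_zero z, by simpa using (shiftPad_succ z 0).trans hz0⟩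
    | succ k ih =>
      refine ⟨ih.2, ?_⟩
      by_cases hk : k < n + 1
      · have hk' := congrFun hz ⟨k, by omega⟩
        rw [hrow, Pi.smul_apply, ← shiftPad_succ z] at hk'
        simp only [ih.1, ih.2, mul_zero, smul_zero, zero_add] at hk'
        have hek : shiftPad e (k + 1) ≠ 0 := (shiftPad_succ e ⟨k, hk⟩).symm ▸ he ⟨k, hk⟩
        exact (mul_eq_zero.mp hk').resolve_left hek
      · exact shiftPad_of_lt z (by omega)
  funext j
  exact shiftPad_succ z j ▸ (hvanish j).2

theorem exists_eq_smul_of_pathAdjMatrix_mulVec_eq_smul {e : Fin (n+1) → ℝ} (he : ∀ i, e i ≠ 0)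
    {σ : ℝ} {v z : Fin (n+2) → ℝ} (hv : pathAdjMatrix n e *ᵥ v = σ • v) (hv0 : v 0 ≠ 0)
    (hz : pathAdjMatrix n e *ᵥ z = σ • z) : ∃ c : ℝ, z = c • v := by
  refine ⟨z 0 / v 0, sub_eq_zero.mp (eq_zero_of_pathAdjMatrix_mulVec_eq_smul he (σ := σ) ?_ ?_)⟩
  · rw [mulVec_sub, mulVec_smul, hz, hv, smul_sub, smul_comm]
  · simp [div_mul_cancel₀ _ hv0]

theorem hasDerivAt_pathAdjMatrix_apply {e : ℝ → Fin (n+1) → ℝ} {e' : Fin (n+1) → ℝ} {t : ℝ}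
    (he : ∀ i, HasDerivAt (fun s => e s i) (e' i) t) (i j : Fin (n+2)) :
    HasDerivAt (fun s => pathAdjMatrix n (e s) i j) (pathAdjMatrix n e' i j) t := by
  simp only [pathAdjMatrix, of_apply]
  split_ifs
  exacts [he _, he _, hasDerivAt_const _ _]

end PathAdjMatrix

theorem abs_le_of_mulVec_le {ι : Type*} [Fintype ι] {A : Matrix ι ι ℝ} (hA : ∀ i j, 0 ≤ A i j)
    {u : ι → ℝ} (hu : ∀ i, 0 < u i) {ψ : ℝ} (hψ : ∀ i, (A *ᵥ u) i ≤ ψ * u i)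
    {μ : ℝ} {z : ι → ℝ} (hz0 : z ≠ 0) (hz : A *ᵥ z = μ • z) : |μ| ≤ ψ := by
  obtain ⟨j₁, hj₁⟩ := Function.ne_iff.mp hz0
  have : Nonempty ι := ⟨j₁⟩
  obtain ⟨j, hj⟩ := Finite.exists_max fun k => |z k| / u k
  set M := |z j| / u j
  have hzM : ∀ k, |z k| ≤ M * u k := fun k => (div_le_iff₀ (hu k)).mp (hj k)
  have hM : 0 < M := (div_pos (abs_pos.mpr hj₁) (hu j₁)).trans_le (hj j₁)
  have hzj : |z j| = M * u j := (div_mul_cancel₀ _ (hu j).ne').symm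
  have key : |μ| * |z j| ≤ ψ * |z j| := by
    calc |μ| * |z j| = |(A *ᵥ z) j| := by rw [hz, Pi.smul_apply, smul_eq_mul, abs_mul]
      _ ≤ ∑ k, A j k * |z k| := by
        refine (Finset.abs_sum_le_sum_abs _ _).trans_eq (Finset.sum_congr rfl fun k _ => ?_)
        rw [abs_mul, abs_of_nonneg (hA j k)]
      _ ≤ ∑ k, A j k * (M * u k) :=
        Finset.sum_le_sum fun k _ => mul_le_mul_of_nonneg_left (hzM k) (hA j k)
      _ = M * (A *ᵥ u) j := by
        rw [mulVec, dotProduct, Finset.mul_sum]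
        exact Finset.sum_congr rfl fun k _ => by ring
      _ ≤ M * (ψ * u j) := mul_le_mul_of_nonneg_left (hψ j) hM.le
      _ = ψ * |z j| := by rw [hzj]; ring
  exact le_of_mul_le_mul_right key (hzj ▸ mul_pos hM (hu j))

theorem exists_mulVec_eq_smul_add {ι : Type*} [Fintype ι] [DecidableEq ι] {A : Matrix ι ι ℝ}
    (hA : Aᵀ = A) {σ : ℝ} {v r : ι → ℝ} (hker : ∀ z, A *ᵥ z = σ • z → ∃ c : ℝ, z = c • v)
    (hr : v ⬝ᵥ r = 0) : ∃ w, A *ᵥ w = σ • w + r := by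
  set T : EuclideanSpace ℝ ι →ₗ[ℝ] EuclideanSpace ℝ ι := A.toEuclideanLin - σ • LinearMap.id
  have hT : T.IsSymmetric :=
    (isSymmetric_toEuclideanLin_iff.mpr ((conjTranspose_eq_transpose_of_trivial A).trans hA)).sub
      (LinearMap.IsSymmetric.id.smul (conj_trivial σ))
  have hr' : WithLp.toLp 2 r ∈ (LinearMap.ker T)ᗮ := by
    intro z hz
    obtain ⟨c, hc⟩ := hker z.ofLp (by
      simpa [T, sub_eq_zero] using congrArg WithLp.ofLp (LinearMap.mem_ker.mp hz))
    rw [EuclideanSpace.inner_eq_star_dotProduct, hc]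
    simp [dotProduct_comm, hr]
  rw [← hT.orthogonal_range, Submodule.orthogonal_orthogonal] at hr'
  obtain ⟨w, hw⟩ := hr'
  refine ⟨w.ofLp, ?_⟩
  have := congrArg WithLp.ofLp hw
  simp only [LinearMap.sub_apply, LinearMap.smul_apply, LinearMap.id_coe, id_eq, WithLp.ofLp_sub,
    ofLp_toLpLin, toLin'_apply, WithLp.ofLp_smul, T] at this
  rw [← this]
  abel

theorem hasDerivAt_mulVec_apply {ι κ : Type*} [Fintype κ] {M : ℝ → Matrix ι κ ℝ}
    {M' : Matrix ι κ ℝ} {x : ℝ → κ → ℝ} {x' : κ → ℝ} {t : ℝ}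
    (hM : ∀ i k, HasDerivAt (fun s => M s i k) (M' i k) t)
    (hx : ∀ k, HasDerivAt (fun s => x s k) (x' k) t) (i : ι) :
    HasDerivAt (fun s => (M s *ᵥ x s) i) ((M' *ᵥ x t) i + (M t *ᵥ x') i) t := by
  simp only [mulVec, dotProduct, ← Finset.sum_add_distrib]
  exact HasDerivAt.fun_sum fun k _ => (hM i k).mul (hx k)

theorem HasDerivAt.eventually_lt_of_neg {g : ℝ → ℝ} {g' x : ℝ} (hg : HasDerivAt g g' x)
    (hg' : g' < 0) : ∀ᶠ t in 𝓝[>] 0, g (x + t) < g x := by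
  filter_upwards [hg.tendsto_slope_zero_right.eventually (eventually_lt_nhds hg'),
    self_mem_nhdsWithin] with t hslope (ht : 0 < t)
  rwa [smul_eq_mul, inv_mul_lt_iff₀ ht, mul_zero, sub_neg] at hslope

theorem eventually_forall_pos_add_smul {ι : Type*} [Finite ι] {x : ι → ℝ} (hx : ∀ i, 0 < x i)
    (y : ι → ℝ) : ∀ᶠ t in 𝓝 (0 : ℝ), ∀ i, 0 < (x + t • y) i := by
  refine eventually_all.mpr fun i => ?_
  have hcont : Continuous fun t : ℝ => (x + t • y) i := by fun_prop
  exact continuousAt_const.eventually_lt hcont.continuousAt (by simpa using hx i)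

theorem hasDerivAt_rpow_neg_half_add_mul {a : ℝ} (ha : 0 < a) (d : ℝ) :
    HasDerivAt (fun t => (a + t * d) ^ (-(1/2) : ℝ)) (-(1/2) * a ^ (-(3/2) : ℝ) * d) 0 := by
  have hlin : HasDerivAt (fun t : ℝ => a + t * d) d 0 := by
    simpa using ((hasDerivAt_id (0 : ℝ)).mul_const d).const_add a
  convert hlin.rpow_const (p := -(1/2)) (Or.inl (by simpa using ha.ne')) using 1
  norm_num
  ring

section PerronRoot

variable {n : ℕ}

theorem sigmaB_le_of_mulVec_le {m : Fin (n+1) → ℝ} (hm : ∀ i, 0 < m i)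
    {u : Fin (n+2) → ℝ} (hu : ∀ j, 0 < u j) {ψ : ℝ} (hψ : ∀ j, (Bmat n m *ᵥ u) j ≤ ψ * u j) :
    sigmaB n m ≤ ψ := by
  have hB : ∀ i j, 0 ≤ Bmat n m i j :=
    pathAdjMatrix_nonneg fun i => (rpow_pos_of_pos (hm i) _).le
  have hBu : 0 ≤ (Bmat n m *ᵥ u) 0 := by
    rw [mulVec, dotProduct]
    exact Finset.sum_nonneg fun k _ => mul_nonneg (hB 0 k) (hu k).le
  refine Real.sSup_le ?_ (nonneg_of_mul_nonneg_left (hBu.trans (hψ 0)) (hu 0))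
  rintro μ ⟨z, hz0, hz⟩
  exact (le_abs_self μ).trans (abs_le_of_mulVec_le hB hu hψ hz0 hz)

theorem IsPerronVector.sigmaB_pos {l : Fin (n+1) → ℝ} (hl : ∀ i, 0 < l i)
    {v : Fin (n+2) → ℝ} (hv : IsPerronVector n l v) : 0 < sigmaB n l := by
  have h := congrFun hv.2.2 0
  rw [Bmat_eq_pathAdjMatrix, pathAdjMatrix_mulVec_apply (shiftPad_succ _) (shiftPad_zero v)
    (shiftPad_of_lt v (by omega)) (shiftPad_succ v)] at h
  simp only [Fin.val_zero, shiftPad_zero, mul_zero, zero_add, Pi.smul_apply, smul_eq_mul] at h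
  have hpos : 0 < sigmaB n l * v 0 := h ▸ mul_pos
    (shiftPad_pos (fun i => rpow_pos_of_pos (hl i) _) one_ne_zero (by omega))
    (shiftPad_pos hv.1 two_ne_zero (by omega))
  exact pos_of_mul_pos_left hpos (hv.1 0).le

theorem hasDerivAt_Bmat_mulVec_apply {l : Fin (n+1) → ℝ} (hl : ∀ i, 0 < l i)
    (δ : Fin (n+1) → ℝ) (v w : Fin (n+2) → ℝ) (j : Fin (n+2)) :
    HasDerivAt (fun t : ℝ => (Bmat n (l + t • δ) *ᵥ (v + t • w)) j)
      ((pathAdjMatrix n (fun i => -(1/2) * l i ^ (-(3/2) : ℝ) * δ i) *ᵥ v) j +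
        (Bmat n l *ᵥ w) j) 0 := by
  have hx : ∀ k, HasDerivAt (fun t : ℝ => (v + t • w) k) (w k) 0 := fun k => by
    simpa using ((hasDerivAt_id (0 : ℝ)).mul_const (w k)).const_add (v k)
  simpa [Bmat_eq_pathAdjMatrix] using hasDerivAt_mulVec_apply
    (hasDerivAt_pathAdjMatrix_apply fun i => hasDerivAt_rpow_neg_half_add_mul (hl i) (δ i)) hx j

/-- `u = v + t • w` is a Collatz–Wielandt test vector for `B(λ + t • δ)` with bound
`σ + t * c / 2` once `t > 0` is small. -/
theorem exists_sigmaB_add_smul_lt {l : Fin (n+1) → ℝ} (hl : ∀ i, 0 < l i)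
    {v : Fin (n+2) → ℝ} (hv : ∀ j, 0 < v j) {σ : ℝ} (hBv : Bmat n l *ᵥ v = σ • v)
    (δ : Fin (n+1) → ℝ) {w : Fin (n+2) → ℝ} {c : ℝ} (hc : c < 0)
    (hderiv : ∀ j, HasDerivAt (fun t : ℝ => (Bmat n (l + t • δ) *ᵥ (v + t • w)) j)
      (σ * w j + c * v j) 0) :
    ∃ t : ℝ, (∀ i, 0 < (l + t • δ) i) ∧ sigmaB n (l + t • δ) < σ := by
  set g : Fin (n+2) → ℝ → ℝ := fun j t =>
    (Bmat n (l + t • δ) *ᵥ (v + t • w)) j - (σ + t * (c / 2)) * (v + t • w) j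
  have hg : ∀ j, HasDerivAt (g j) (c / 2 * v j) 0 := by
    intro j
    have hbound := (((hasDerivAt_id (0 : ℝ)).mul_const (c / 2)).const_add σ).fun_mul
      (((hasDerivAt_id (0 : ℝ)).mul_const (w j)).const_add (v j))
    simp only [id, zero_mul, add_zero, one_mul] at hbound
    exact ((hderiv j).sub hbound).congr_deriv (by ring)
  have hev : ∀ᶠ t in 𝓝[>] (0 : ℝ), 0 < t ∧ (∀ i, 0 < (l + t • δ) i) ∧
      (∀ j, 0 < (v + t • w) j) ∧ ∀ j, g j t < 0 := by
    refine eventually_mem_nhdsWithin.and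
      (((eventually_forall_pos_add_smul hl δ).filter_mono nhdsWithin_le_nhds).and
      (((eventually_forall_pos_add_smul hv w).filter_mono nhdsWithin_le_nhds).and
      (eventually_all.mpr fun j => ?_)))
    filter_upwards [(hg j).eventually_lt_of_neg (mul_neg_of_neg_of_pos (by linarith) (hv j))]
      with t ht
    simpa [g, hBv] using ht
  obtain ⟨t, ht, hlt, hvt, hgt⟩ := hev.exists
  refine ⟨t, hlt, (sigmaB_le_of_mulVec_le hlt hvt fun j => (sub_neg.mp (hgt j)).le).trans_lt ?_⟩
  nlinarith

end PerronRoot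

/-- By first-order perturbation theory, `∂σ/∂λ_i = -edgeWeight n l v i` for a unit Perron
vector `v` of `B(λ)`. -/
noncomputable def edgeWeight (n : ℕ) (l : Fin (n+1) → ℝ) (v : Fin (n+2) → ℝ)
    (i : Fin (n+1)) : ℝ :=
  l i ^ (-(3/2) : ℝ) * v i.castSucc * v i.succ

section Minimizer

variable {n : ℕ} {l : Fin (n+1) → ℝ} {v : Fin (n+2) → ℝ}

theorem IsMinimizer.edgeWeight_le (hmin : IsMinimizer n l) (hv : IsPerronVector n l v)
    (p r : Fin (n+1)) : edgeWeight n l v p ≤ edgeWeight n l v r := by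
  obtain ⟨⟨hl, hsum⟩, hmin⟩ := hmin
  obtain ⟨hv, hnorm, hBv⟩ := hv
  by_contra! hlt
  set δ : Fin (n+1) → ℝ := Pi.single p 1 - Pi.single r 1
  set B' := pathAdjMatrix n fun i => -(1/2) * l i ^ (-(3/2) : ℝ) * δ i
  set c := v ⬝ᵥ (B' *ᵥ v)
  have hc : c = edgeWeight n l v r - edgeWeight n l v p := by
    simp only [c, B', dotProduct_pathAdjMatrix_mulVec, δ, edgeWeight, Pi.sub_apply,
      Pi.single_apply, mul_sub, sub_mul, mul_ite, ite_mul, mul_one, mul_zero, zero_mul,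
      Finset.sum_sub_distrib, Finset.sum_ite_eq', Finset.mem_univ, ↓reduceIte]
    ring
  have hvv : v ⬝ᵥ v = 1 := by simpa [dotProduct, sq] using hnorm
  -- `c` makes `c • v - B' *ᵥ v` orthogonal to `v`, so the first-order correction `w` exists
  obtain ⟨w, hw⟩ : ∃ w, Bmat n l *ᵥ w = sigmaB n l • w + (c • v - B' *ᵥ v) :=
    exists_mulVec_eq_smul_add (pathAdjMatrix_transpose _)
      (fun z hz => exists_eq_smul_of_pathAdjMatrix_mulVec_eq_smul
        (fun i => (rpow_pos_of_pos (hl i) _).ne') hBv (hv 0).ne' hz)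
      (by rw [dotProduct_sub, dotProduct_smul, hvv, smul_eq_mul, mul_one, sub_self])
  obtain ⟨t, hpos, hσ⟩ := exists_sigmaB_add_smul_lt hl hv hBv δ (c := c) (by linarith) fun j =>
    (hasDerivAt_Bmat_mulVec_apply hl δ v w j).congr_deriv (by
      rw [hw]
      simp only [Pi.add_apply, Pi.smul_apply, smul_eq_mul, Pi.sub_apply, B']
      ring)
  refine hσ.not_ge (hmin _ ⟨hpos, ?_⟩)
  simpa [Finset.sum_add_distrib, ← Finset.mul_sum, δ] using hsum

theorem IsMinimizer.edgeWeight_eq (hmin : IsMinimizer n l) (hv : IsPerronVector n l v)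
    (p r : Fin (n+1)) : edgeWeight n l v p = edgeWeight n l v r :=
  (hmin.edgeWeight_le hv p r).antisymm (hmin.edgeWeight_le hv r p)

theorem IsMinimizer.cbrt_edge_eq (hmin : IsMinimizer n l) (hv : IsPerronVector n l v)
    (p r : Fin (n+1)) :
    l p ^ (-(1/2) : ℝ) * v p.castSucc ^ ((1:ℝ)/3) * v p.succ ^ ((1:ℝ)/3) =
      l r ^ (-(1/2) : ℝ) * v r.castSucc ^ ((1:ℝ)/3) * v r.succ ^ ((1:ℝ)/3) := by
  have hl := hmin.1.1
  have hcube : ∀ i, (l i ^ (-(1/2) : ℝ) * v i.castSucc ^ ((1:ℝ)/3) * v i.succ ^ ((1:ℝ)/3)) ^ 3 =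
      edgeWeight n l v i := fun i => by
    rw [mul_pow, mul_pow, ← rpow_mul_natCast (hl i).le, ← rpow_mul_natCast (hv.1 _).le,
      ← rpow_mul_natCast (hv.1 _).le, edgeWeight]
    norm_num
  have hnonneg : ∀ i, 0 ≤ l i ^ (-(1/2) : ℝ) * v i.castSucc ^ ((1:ℝ)/3) * v i.succ ^ ((1:ℝ)/3) :=
    fun i => by have := hl i; have := hv.1 i.castSucc; have := hv.1 i.succ; positivity
  rw [← pow_left_inj₀ (hnonneg p) (hnonneg r) three_ne_zero, hcube, hcube]
  exact hmin.edgeWeight_eq hv p r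

theorem IsMinimizer.exists_rpow_neg_half_eq (hmin : IsMinimizer n l) (hv : IsPerronVector n l v) :
    ∃ γ > 0, ∀ i : Fin (n+1),
      l i ^ (-(1/2) : ℝ) = γ / (v i.castSucc ^ ((1:ℝ)/3) * v i.succ ^ ((1:ℝ)/3)) := by
  have hl := hmin.1.1
  refine ⟨l 0 ^ (-(1/2) : ℝ) * v (0 : Fin (n+1)).castSucc ^ ((1:ℝ)/3) *
    v (0 : Fin (n+1)).succ ^ ((1:ℝ)/3), ?_, fun i => ?_⟩
  · have := hl 0
    have := hv.1 (0 : Fin (n+1)).castSucc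
    have := hv.1 (0 : Fin (n+1)).succ
    positivity
  · have := hv.1 i.castSucc
    have := hv.1 i.succ
    rw [eq_div_iff (by positivity), ← mul_assoc, ← hmin.cbrt_edge_eq hv i 0]

end Minimizer

theorem div_mul_sq_pow_three_eq {σ γ b c : ℝ} (hγ : γ ≠ 0) (hb : b ≠ 0)
    (h : σ * b ^ 3 = γ / (b * c) * c ^ 3) :
    (σ / γ * b ^ 2) ^ 3 = σ ^ 2 * ((γ / (b * c)) ^ 2)⁻¹ := by
  field_simp at h ⊢
  linear_combination σ ^ 2 * h

theorem sq_add_sq_eq_of_cube_eq {σ γ a b c : ℝ} (hγ : γ ≠ 0) (hb : b ≠ 0)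
    (h : σ * b ^ 3 = γ / (a * b) * a ^ 3 + γ / (b * c) * c ^ 3) :
    a ^ 2 + c ^ 2 = σ / γ * (b ^ 2) ^ 2 := by
  have cancel : ∀ x : ℝ, γ / (x * b) * x ^ 3 = γ * x ^ 2 / b := fun x => by
    rcases eq_or_ne x 0 with rfl | hx
    · simp
    · field_simp
  rw [cancel a, mul_comm b c, cancel c] at h
  have h' : γ * (a ^ 2 + c ^ 2) = σ * b ^ 4 := by
    field_simp at h
    linear_combination -h
  field_simp
  linear_combination h'

theorem mul_lt_two_of_add_eq_mul_sq {s : ℕ → ℝ} {K : ℝ} {N : ℕ} (hK : 0 ≤ K) (h0 : s 0 = 0)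
    (hN : s (N + 1) = 0) (hrec : ∀ j < N, s j + s (j + 2) = K * s (j + 1) ^ 2) :
    ∀ i ≤ N + 1, K * s i < 2 := by
  obtain ⟨k, hk, hmax⟩ := Finset.exists_max_image (Finset.range (N + 2)) s ⟨0, by simp⟩
  have hle : ∀ i ≤ N + 1, s i ≤ s k := fun i hi => hmax i (Finset.mem_range.mpr (by omega))
  suffices K * s k < 2 from fun i hi => (mul_le_mul_of_nonneg_left (hle i hi) hK).trans_lt this
  rcases le_or_gt (s k) 0 with hk0 | hk0
  · nlinarith
  obtain ⟨j, rfl⟩ : ∃ j, k = j + 1 :=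
    Nat.exists_eq_add_one.mpr (Nat.pos_of_ne_zero (by rintro rfl; linarith))
  have hj : j < N := by
    by_contra! hj
    obtain rfl : j = N := by rw [Finset.mem_range] at hk; omega
    linarith
  have hKs : K * s (j + 1) ≤ 2 := by
    nlinarith [hrec j hj, hle j (by omega), hle (j + 2) (by omega)]
  refine hKs.lt_of_ne fun heq => ?_
  -- with `K * s = 2` at a maximum, the recursion forces the next value to be maximal too
  have hflat : ∀ d, j + 1 + d ≤ N + 1 → s (j + 1 + d) = s (j + 1) := by
    intro d
    induction d with
    | zero => intro _; rfl
    | succ d ih =>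
      intro hd
      have hprev := hrec (j + d) (by omega)
      rw [show j + d + 1 = j + 1 + d by omega, show j + d + 2 = j + 1 + (d + 1) by omega,
        ih (by omega)] at hprev
      nlinarith [hle (j + d) (by omega), hle (j + 1 + (d + 1)) hd]
  have := hflat (N - j) (by omega)
  rw [show j + 1 + (N - j) = N + 1 by omega, hN] at this
  linarith

theorem IsMinimizer.exists_rpow_two_thirds_recursion {n : ℕ} {l : Fin (n+1) → ℝ}
    (hmin : IsMinimizer n l) {v : Fin (n+2) → ℝ} (hvP : IsPerronVector n l v) :
    ∃ K > 0, (K * shiftPad v 1 ^ ((2:ℝ)/3)) ^ 3 = sigmaB n l ^ 2 * l 0 ∧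
      ∀ j < n + 2, shiftPad v j ^ ((2:ℝ)/3) + shiftPad v (j + 2) ^ ((2:ℝ)/3) =
        K * (shiftPad v (j + 1) ^ ((2:ℝ)/3)) ^ 2 := by
  have hl := hmin.1.1
  set σ := sigmaB n l
  obtain ⟨γ, hγ, hμ⟩ := hmin.exists_rpow_neg_half_eq hvP
  set V : ℕ → ℝ := fun k => shiftPad v k ^ ((1:ℝ)/3)
  have hX := shiftPad_nonneg fun j => (hvP.1 j).le
  have hV3 : ∀ k, V k ^ 3 = shiftPad v k := fun k => by
    rw [← rpow_mul_natCast (hX k)]; norm_num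
  have hV2 : ∀ k, shiftPad v k ^ ((2:ℝ)/3) = V k ^ 2 := fun k => by
    rw [← rpow_mul_natCast (hX k)]; norm_num
  have hVpos : ∀ k, k ≠ 0 → k ≤ n + 2 → 0 < V k := fun k h0 hk =>
    rpow_pos_of_pos (shiftPad_pos hvP.1 h0 hk) _
  -- agrees with `λ^{-1/2}` on the edges and makes every row homogeneous in `V`
  set E : ℕ → ℝ := fun k => γ / (V k * V (k + 1))
  have hE : ∀ i : Fin (n+1), E (i + 1) = l i ^ (-(1/2) : ℝ) := fun i => by
    rw [hμ i, ← shiftPad_succ v i.castSucc, ← shiftPad_succ v i.succ]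
    rfl
  have hrow : ∀ j : Fin (n+2), σ * V (j + 1) ^ 3 = E j * V j ^ 3 + E (j + 1) * V (j + 2) ^ 3 := by
    intro j
    simp only [hV3]
    rw [← pathAdjMatrix_mulVec_apply hE (shiftPad_zero v) (shiftPad_of_lt v (by omega))
      (shiftPad_succ v) j, shiftPad_succ, ← Bmat_eq_pathAdjMatrix, hvP.2.2, Pi.smul_apply,
      smul_eq_mul]
  have hl₀ : l 0 = (E 1 ^ 2)⁻¹ := by
    rw [show E 1 = l 0 ^ (-(1/2) : ℝ) by simpa using hE 0, ← rpow_mul_natCast (hl 0).le]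
    norm_num [rpow_neg_one]
  refine ⟨σ / γ, div_pos (hvP.sigmaB_pos hl) hγ, ?_, fun j hj => ?_⟩
  · rw [hV2, hl₀]
    exact div_mul_sq_pow_three_eq hγ.ne' (hVpos 1 one_ne_zero (by omega)).ne'
      (by simpa [V, E] using hrow 0)
  · rw [hV2, hV2, hV2]
    exact sq_add_sq_eq_of_cube_eq hγ.ne' (hVpos (j + 1) (by omega) (by omega)).ne' (hrow ⟨j, hj⟩)

theorem rpow_neg_two_thirds_mul_rpow_neg_one_third_mul {x y P : ℝ} (hx : 0 < x) (hy : 0 < y)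
    (hP : 0 ≤ P) (h : P ^ 3 = x ^ 2 * y) : x ^ (-(2:ℝ)/3) * y ^ (-(1:ℝ)/3) * P = 1 := by
  have hcube : (x ^ (-(2:ℝ)/3) * y ^ (-(1:ℝ)/3) * P) ^ 3 = 1 ^ 3 := by
    rw [mul_pow, mul_pow, h, ← rpow_mul_natCast hx.le, ← rpow_mul_natCast hy.le]
    norm_num [rpow_neg_one]
    field_simp
  exact (pow_left_inj₀ (by positivity) zero_le_one three_ne_zero).mp hcube

theorem stmt_10_general (n : ℕ) (l : Fin (n+1) → ℝ)
    (hmin : IsMinimizer n l) (v : Fin (n+2) → ℝ) (hv : IsPerronVector n l v)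
    (ve : ℕ → ℝ) (hve0 : ve 0 = 0) (hveTop : ve (n+3) = 0)
    (hve : ∀ j : Fin (n+2), ve ((j : ℕ) + 1) = v j)
    (a : ℕ → ℝ) (ha : ∀ i, i ≤ n+3 → a i = (ve i / ve 1) ^ ((2:ℝ)/3))
    (q : ℝ)
    (hq : q = 2 * sigmaB n l ^ (-(2:ℝ)/3) * l 0 ^ (-(1:ℝ)/3)) :
    ∀ i : ℕ, i ≤ n+3 → a i < q := by
  obtain ⟨K, hK, hcube, hrec⟩ := hmin.exists_rpow_two_thirds_recursion hv
  set s : ℕ → ℝ := fun k => shiftPad v k ^ ((2:ℝ)/3)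
  have hbound : ∀ i ≤ n + 3, K * s i < 2 :=
    mul_lt_two_of_add_eq_mul_sq hK.le (by simp [s]) (by simp [s, shiftPad_of_lt]) hrec
  have hs₁ : 0 < s 1 := rpow_pos_of_pos (shiftPad_pos hv.1 one_ne_zero (by omega)) _
  have hqK : q * (K * s 1) = 2 := by
    rw [hq, mul_assoc 2, mul_assoc 2, rpow_neg_two_thirds_mul_rpow_neg_one_third_mul
      (hv.sigmaB_pos hmin.1.1) (hmin.1.1 0) (mul_pos hK hs₁).le hcube, mul_one]
  have hpad := shiftPad_nonneg fun j => (hv.1 j).le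
  intro i hi
  rw [ha i hi, eq_shiftPad_of_le hve0 hveTop hve hi, eq_shiftPad_of_le hve0 hveTop hve (by omega),
    div_rpow (hpad i) (hpad 1), div_lt_iff₀ hs₁]
  nlinarith [hbound i hi]

/-- all the `ā_i` (1-based indexing, with `v̄_0 := 0`, `v̄_{n+3} := 0`)
are bounded above by `q̄ = 2 σ̄^{-2/3} λ̄_0^{-1/3}`. -/
theorem stmt_10 (n : ℕ) (hn : 1 ≤ n) (l : Fin (n+1) → ℝ)
    (hmin : IsMinimizer n l) (v : Fin (n+2) → ℝ) (hv : IsPerronVector n l v)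
    (ve : ℕ → ℝ) (hve0 : ve 0 = 0) (hveTop : ve (n+3) = 0)
    (hve : ∀ j : Fin (n+2), ve ((j : ℕ) + 1) = v j)
    (a : ℕ → ℝ) (ha : ∀ i, i ≤ n+3 → a i = (ve i / ve 1) ^ ((2:ℝ)/3))
    (q : ℝ)
    (hq : q = 2 * sigmaB n l ^ (-(2:ℝ)/3) * l 0 ^ (-(1:ℝ)/3)) :
    ∀ i : ℕ, i ≤ n+3 → a i < q :=
  stmt_10_general n l hmin v hv ve hve0 hveTop hve a ha q hq
end
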